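/- arXiv:1904.07184 — 5 statements merged into one kernel-verified Lean document; each statement's English description precedes it below -/
import Mathlib

section
/- Let Ê be a sublinear expectation, and let X, Y be real random variables with Ê[X] = Ê[−X] = 0, Ê[|X|³] = M_X³ < ∞, Ê[|X|²] = M_X² < ∞, Ê[|Y|²] = M_Y² < ∞. Let ψ : ℝ → ℝ be smooth, bounded below, with bounded derivatives of all orders, and define G(p, A) := Ê[pY + (1/2)A X²] for p, A ∈ ℝ. Then for all Δ ∈ (0,1) and x ∈ ℝ: |(Ê[ψ(x + √Δ X + Δ Y)] − ψ(x))/Δ − G(ψ'(x), ψ''(x))| ≤ √Δ·‖ψ'''‖_∞·M_X³ + √Δ·‖ψ''‖_∞·(M_X² + M_Y²). -/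
open Set

/-- Mean value inequality on ℝ with a global derivative bound. -/
lemma lip_of_deriv_bound {f : ℝ → ℝ} (hf : Differentiable ℝ f) {C : ℝ}
    (hC : ∀ z, |deriv f z| ≤ C) (a b : ℝ) : |f b - f a| ≤ C * |b - a| := by
  have := Convex.norm_image_sub_le_of_norm_deriv_le (f := f) (C := C) (s := univ)
    (fun x _ => hf x) (fun x _ => hC x) convex_univ (mem_univ a) (mem_univ b)
  simpa [Real.norm_eq_abs] using this

/-- Upper second-order Taylor bound. -/
lemma taylor1_upper {f : ℝ → ℝ} (hf : Differentiable ℝ f)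
    (hf' : Differentiable ℝ (deriv f)) {C : ℝ}
    (hC : ∀ z, |deriv (deriv f) z| ≤ C) (a b : ℝ) :
    f b - f a - deriv f a * (b - a) ≤ C / 2 * (b - a) ^ 2 := by
  set u : ℝ → ℝ := fun t => f t - deriv f a * t - C / 2 * (t - a) ^ 2 with hu_def
  have hu : ∀ t, HasDerivAt u (deriv f t - deriv f a - C * (t - a)) t := by
    intro t
    have h1 : HasDerivAt (fun t : ℝ => deriv f a * t) (deriv f a) t := by
      simpa using (hasDerivAt_id t).const_mul (deriv f a)
    have h2 : HasDerivAt (fun t : ℝ => (t - a) ^ 2) (2 * (t - a)) t := by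
      simpa using ((hasDerivAt_id t).sub_const a).fun_pow 2
    have := ((hf t).hasDerivAt.sub h1).sub (h2.const_mul (C / 2))
    exact this.congr_deriv (by ring)
  have hud : Differentiable ℝ u := fun t => (hu t).differentiableAt
  have hbound : ∀ t, |deriv f t - deriv f a| ≤ C * |t - a| :=
    fun t => lip_of_deriv_bound hf' hC a t
  have key : u b ≤ u a := by
    rcases le_total a b with hab | hab
    · have mono : AntitoneOn u (Icc a b) := by
        apply antitoneOn_of_deriv_nonpos (convex_Icc a b) hud.continuous.continuousOn
          hud.differentiableOn
        intro t ht
        rw [interior_Icc] at ht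
        rw [(hu t).deriv]
        have h1 := (abs_le.1 (hbound t)).2
        rw [abs_of_nonneg (by linarith [ht.1] : (0:ℝ) ≤ t - a)] at h1
        linarith
      exact mono (left_mem_Icc.2 hab) (right_mem_Icc.2 hab) hab
    · have mono : MonotoneOn u (Icc b a) := by
        apply monotoneOn_of_deriv_nonneg (convex_Icc b a) hud.continuous.continuousOn
          hud.differentiableOn
        intro t ht
        rw [interior_Icc] at ht
        rw [(hu t).deriv]
        have h1 := (abs_le.1 (hbound t)).1
        rw [abs_of_nonpos (by linarith [ht.2] : t - a ≤ 0)] at h1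
        linarith
      exact mono (left_mem_Icc.2 hab) (right_mem_Icc.2 hab) hab
  have haa : ((a : ℝ) - a) ^ 2 = 0 := by ring
  simp only [hu_def] at key
  nlinarith [key]

/-- Two-sided second-order Taylor bound. -/
lemma taylor1_bound {f : ℝ → ℝ} (hf : Differentiable ℝ f)
    (hf' : Differentiable ℝ (deriv f)) {C : ℝ}
    (hC : ∀ z, |deriv (deriv f) z| ≤ C) (a b : ℝ) :
    |f b - f a - deriv f a * (b - a)| ≤ C / 2 * (b - a) ^ 2 := by
  have h1 := taylor1_upper hf hf' hC a b
  have e1 : deriv (fun t => -f t) = fun t => -deriv f t := by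
    funext t; exact deriv.neg
  have hg : Differentiable ℝ (fun t => -f t) := hf.neg
  have hg' : Differentiable ℝ (deriv (fun t => -f t)) := by
    rw [e1]; exact hf'.neg
  have hgC : ∀ z, |deriv (deriv (fun t => -f t)) z| ≤ C := by
    intro z
    rw [e1]
    have e2 : deriv (fun t => -deriv f t) = fun t => -deriv (deriv f) t := by
      funext t; exact deriv.neg
    rw [e2]
    simpa using hC z
  have h2 := taylor1_upper hg hg' hgC a b
  rw [e1] at h2
  simp only at h2
  rw [abs_le]
  constructor <;> nlinarith [h1, h2]

/-- Third-order Taylor bound. -/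
lemma taylor2_bound {f : ℝ → ℝ} (hf : Differentiable ℝ f)
    (hf' : Differentiable ℝ (deriv f)) (hf'' : Differentiable ℝ (deriv (deriv f))) {C : ℝ}
    (hC : ∀ z, |deriv (deriv (deriv f)) z| ≤ C) (a b : ℝ) :
    |f b - f a - deriv f a * (b - a) - 1 / 2 * deriv (deriv f) a * (b - a) ^ 2|
      ≤ C / 2 * |b - a| ^ 3 := by
  set g : ℝ → ℝ := fun t => f t - deriv f a * t - 1 / 2 * deriv (deriv f) a * (t - a) ^ 2
    with hg_def
  have hg : ∀ t, HasDerivAt g (deriv f t - deriv f a - deriv (deriv f) a * (t - a)) t := by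
    intro t
    have h1 : HasDerivAt (fun t : ℝ => deriv f a * t) (deriv f a) t := by
      simpa using (hasDerivAt_id t).const_mul (deriv f a)
    have h2 : HasDerivAt (fun t : ℝ => (t - a) ^ 2) (2 * (t - a)) t := by
      simpa using ((hasDerivAt_id t).sub_const a).fun_pow 2
    have := ((hf t).hasDerivAt.sub h1).sub (h2.const_mul (1 / 2 * deriv (deriv f) a))
    exact this.congr_deriv (by ring)
  have hbound : ∀ t ∈ uIcc a b, ‖deriv g t‖ ≤ C / 2 * (b - a) ^ 2 := by
    intro t ht
    rw [Real.norm_eq_abs, (hg t).deriv]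
    have h1 := taylor1_bound hf' hf'' hC a t
    have h2 : (t - a) ^ 2 ≤ (b - a) ^ 2 := by
      rcases le_total a b with hab | hab
      · rw [uIcc_of_le hab] at ht
        nlinarith [ht.1, ht.2]
      · rw [uIcc_of_ge hab] at ht
        nlinarith [ht.1, ht.2]
    have hC0 : 0 ≤ C := le_trans (abs_nonneg _) (hC a)
    calc |deriv f t - deriv f a - deriv (deriv f) a * (t - a)|
        ≤ C / 2 * (t - a) ^ 2 := h1
      _ ≤ C / 2 * (b - a) ^ 2 := by nlinarith
  have hlip := Convex.norm_image_sub_le_of_norm_deriv_le (f := g) (C := C / 2 * (b - a) ^ 2)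
    (s := uIcc a b) (fun t _ => (hg t).differentiableAt) hbound (convex_uIcc a b)
    (left_mem_uIcc) (right_mem_uIcc)
  rw [Real.norm_eq_abs, Real.norm_eq_abs] at hlip
  have e1 : g b - g a = f b - f a - deriv f a * (b - a) - 1 / 2 * deriv (deriv f) a * (b - a) ^ 2 := by
    simp only [hg_def]; ring
  rw [e1] at hlip
  have e2 : C / 2 * (b - a) ^ 2 * |b - a| = C / 2 * |b - a| ^ 3 := by
    rw [← sq_abs (b - a)]; ring
  rw [e2] at hlip
  exact hlip
lemma pointwise_est {ψ : ℝ → ℝ} (hd0 : Differentiable ℝ ψ)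
    (hd1 : Differentiable ℝ (deriv ψ)) (hd2 : Differentiable ℝ (deriv (deriv ψ)))
    {C2 C3 : ℝ} (hC2 : ∀ z, |deriv (deriv ψ) z| ≤ C2)
    (hC3 : ∀ z, |deriv (deriv (deriv ψ)) z| ≤ C3)
    {σ Δ : ℝ} (hσ0 : 0 < σ) (hσ1 : σ ≤ 1) (hσ2 : σ ^ 2 = Δ) (x a b : ℝ) :
    |ψ (x + σ * a + Δ * b) - (ψ x + (Δ * (deriv ψ x * b + (1 / 2) * deriv (deriv ψ) x * a ^ 2)
        + (σ * deriv ψ x) * a))|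
      ≤ Δ * σ * C3 * |a| ^ 3 + (Δ * σ * C2 * |a| ^ 2 + Δ * σ * C2 * |b| ^ 2) := by
  have hC20 : 0 ≤ C2 := le_trans (abs_nonneg _) (hC2 0)
  have hC30 : 0 ≤ C3 := le_trans (abs_nonneg _) (hC3 0)
  have hΔ0 : 0 ≤ Δ := hσ2 ▸ sq_nonneg σ
  have harg : x + σ * a + Δ * b = (x + σ * a) + Δ * b := by ring
  have hA := taylor2_bound hd0 hd1 hd2 hC3 x (x + σ * a)
  rw [add_sub_cancel_left] at hA
  have hB := taylor1_bound hd0 hd1 hC2 (x + σ * a) (x + σ * a + Δ * b)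
  rw [add_sub_cancel_left] at hB
  have hD : |deriv ψ (x + σ * a) - deriv ψ x| ≤ C2 * |σ * a| := by
    have := lip_of_deriv_bound hd1 hC2 x (x + σ * a)
    rwa [add_sub_cancel_left] at this
  have hsum : ψ (x + σ * a + Δ * b) - (ψ x + (Δ * (deriv ψ x * b
        + (1 / 2) * deriv (deriv ψ) x * a ^ 2) + (σ * deriv ψ x) * a)) =
      (ψ (x + σ * a) - ψ x - deriv ψ x * (σ * a)
          - 1 / 2 * deriv (deriv ψ) x * (σ * a) ^ 2)
      + (ψ (x + σ * a + Δ * b) - ψ (x + σ * a) - deriv ψ (x + σ * a) * (Δ * b))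
      + ((deriv ψ (x + σ * a) - deriv ψ x) * (Δ * b)) := by
    have h2 : (σ * a) ^ 2 = Δ * a ^ 2 := by rw [← hσ2]; ring
    rw [h2]
    ring
  rw [hsum]
  have habs : |(ψ (x + σ * a) - ψ x - deriv ψ x * (σ * a)
          - 1 / 2 * deriv (deriv ψ) x * (σ * a) ^ 2)
      + (ψ (x + σ * a + Δ * b) - ψ (x + σ * a) - deriv ψ (x + σ * a) * (Δ * b))
      + ((deriv ψ (x + σ * a) - deriv ψ x) * (Δ * b))|
      ≤ C3 / 2 * |σ * a| ^ 3 + C2 / 2 * (Δ * b) ^ 2 + C2 * |σ * a| * |Δ * b| := by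
    have t1 := abs_add_le ((ψ (x + σ * a) - ψ x - deriv ψ x * (σ * a)
          - 1 / 2 * deriv (deriv ψ) x * (σ * a) ^ 2)
      + (ψ (x + σ * a + Δ * b) - ψ (x + σ * a) - deriv ψ (x + σ * a) * (Δ * b)))
      ((deriv ψ (x + σ * a) - deriv ψ x) * (Δ * b))
    have t2 := abs_add_le (ψ (x + σ * a) - ψ x - deriv ψ x * (σ * a)
          - 1 / 2 * deriv (deriv ψ) x * (σ * a) ^ 2)
      (ψ (x + σ * a + Δ * b) - ψ (x + σ * a) - deriv ψ (x + σ * a) * (Δ * b))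
    have t3 : |(deriv ψ (x + σ * a) - deriv ψ x) * (Δ * b)| ≤ C2 * |σ * a| * |Δ * b| := by
      rw [abs_mul]
      exact mul_le_mul_of_nonneg_right hD (abs_nonneg _)
    linarith
  have hsabs : |σ * a| = σ * |a| := by rw [abs_mul, abs_of_nonneg hσ0.le]
  have htabs : |Δ * b| = σ ^ 2 * |b| := by rw [abs_mul, abs_of_nonneg hΔ0, ← hσ2]
  have ht2 : (Δ * b) ^ 2 = σ ^ 2 * σ ^ 2 * |b| ^ 2 := by
    rw [← hσ2, sq_abs b]; ring
  rw [hsabs, htabs, ht2] at habs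
  refine le_trans habs ?_
  rw [← hσ2]
  have hP : C3 / 2 * |a| ^ 3 + C2 / 2 * (σ * |b| ^ 2) + C2 * (|a| * |b|)
      ≤ C3 * |a| ^ 3 + C2 * |a| ^ 2 + C2 * |b| ^ 2 := by
    nlinarith [mul_nonneg hC20 (sq_nonneg (|a| - |b|)),
      mul_nonneg hC30 (pow_nonneg (abs_nonneg a) 3),
      mul_nonneg (mul_nonneg hC20 (sq_nonneg (|b|))) (by linarith : (0:ℝ) ≤ 1 - σ)]
  calc C3 / 2 * (σ * |a|) ^ 3 + C2 / 2 * (σ ^ 2 * σ ^ 2 * |b| ^ 2)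
        + C2 * (σ * |a|) * (σ ^ 2 * |b|)
      = σ ^ 3 * (C3 / 2 * |a| ^ 3 + C2 / 2 * (σ * |b| ^ 2) + C2 * (|a| * |b|)) := by ring
    _ ≤ σ ^ 3 * (C3 * |a| ^ 3 + C2 * |a| ^ 2 + C2 * |b| ^ 2) :=
        mul_le_mul_of_nonneg_left hP (by positivity)
    _ = σ ^ 2 * σ * C3 * |a| ^ 3 + (σ ^ 2 * σ * C2 * |a| ^ 2 + σ ^ 2 * σ * C2 * |b| ^ 2) := by
        ring

theorem stmt_9 {Ω : Type*} (E : (Ω → ℝ) → ℝ)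
    (hmono : ∀ X Y : Ω → ℝ, (∀ ω, X ω ≤ Y ω) → E X ≤ E Y)
    (hconst : ∀ c : ℝ, E (fun _ => c) = c)
    (hsub : ∀ X Y : Ω → ℝ, E (fun ω => X ω + Y ω) ≤ E X + E Y)
    (hpos : ∀ lam : ℝ, 0 ≤ lam → ∀ X : Ω → ℝ, E (fun ω => lam * X ω) = lam * E X)
    (X Y : Ω → ℝ)
    (hX0 : E X = 0) (hX0' : E (fun ω => -X ω) = 0)
    (MX3 MX2 MY2 : ℝ)
    (hMX3 : E (fun ω => |X ω| ^ 3) = MX3)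
    (hMX2 : E (fun ω => |X ω| ^ 2) = MX2)
    (hMY2 : E (fun ω => |Y ω| ^ 2) = MY2)
    (ψ : ℝ → ℝ) (hψ : ContDiff ℝ (⊤ : ℕ∞) ψ)
    (hψlb : ∃ m : ℝ, ∀ z, m ≤ ψ z)
    (hψbdd : ∀ n : ℕ, 1 ≤ n → ∃ C : ℝ, ∀ z, |iteratedDeriv n ψ z| ≤ C)
    (C2 C3 : ℝ)
    (hC2 : ∀ z, |deriv (deriv ψ) z| ≤ C2)
    (hC3 : ∀ z, |deriv (deriv (deriv ψ)) z| ≤ C3)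
    (Δ : ℝ) (hΔ0 : 0 < Δ) (hΔ1 : Δ < 1) (x : ℝ) :
    |(E (fun ω => ψ (x + Real.sqrt Δ * X ω + Δ * Y ω)) - ψ x) / Δ
        - E (fun ω => deriv ψ x * Y ω + (1 / 2) * deriv (deriv ψ) x * (X ω) ^ 2)|
      ≤ Real.sqrt Δ * C3 * MX3 + Real.sqrt Δ * C2 * (MX2 + MY2) := by
  -- basic facts
  have hC20 : 0 ≤ C2 := le_trans (abs_nonneg _) (hC2 0)
  have hC30 : 0 ≤ C3 := le_trans (abs_nonneg _) (hC3 0)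
  have hI : ContDiff ℝ ((⊤ : ℕ∞) : WithTop ℕ∞) ψ := hψ.of_le (by simp)
  have hd0 : Differentiable ℝ ψ := (contDiff_infty_iff_deriv.mp hI).1
  have hψ1 : ContDiff ℝ ((⊤ : ℕ∞) : WithTop ℕ∞) (deriv ψ) := (contDiff_infty_iff_deriv.mp hI).2
  have hd1 : Differentiable ℝ (deriv ψ) := (contDiff_infty_iff_deriv.mp hψ1).1
  have hψ2 : ContDiff ℝ ((⊤ : ℕ∞) : WithTop ℕ∞) (deriv (deriv ψ)) := (contDiff_infty_iff_deriv.mp hψ1).2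
  have hd2 : Differentiable ℝ (deriv (deriv ψ)) := (contDiff_infty_iff_deriv.mp hψ2).1
  set σ := Real.sqrt Δ with hσdef
  have hσ0 : 0 < σ := Real.sqrt_pos.2 hΔ0
  have hσ2 : σ ^ 2 = Δ := Real.sq_sqrt hΔ0.le
  have hσ1 : σ ≤ 1 := by nlinarith
  -- sublinear expectation bookkeeping
  have Elin : ∀ lam : ℝ, E (fun ω => lam * X ω) = 0 := by
    intro lam
    rcases le_or_gt 0 lam with h | h
    · rw [hpos lam h X, hX0, mul_zero]
    · have e : (fun ω => lam * X ω) = (fun ω => (-lam) * ((fun ω => -X ω) ω)) := by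
        funext ω; ring
      rw [e, hpos (-lam) (by linarith) (fun ω => -X ω), hX0', mul_zero]
  have EaddX : ∀ (g : Ω → ℝ) (lam : ℝ), E (fun ω => g ω + lam * X ω) = E g := by
    intro g lam
    apply le_antisymm
    · have := hsub g (fun ω => lam * X ω)
      rw [Elin lam] at this
      simpa using this
    · have e : g = fun ω => (fun ω => g ω + lam * X ω) ω + (-lam) * X ω := by
        funext ω; simp
      calc E g = E (fun ω => (fun ω => g ω + lam * X ω) ω + ((fun ω => (-lam) * X ω) ω)) := by
            rw [← e]
        _ ≤ E (fun ω => g ω + lam * X ω) + E (fun ω => (-lam) * X ω) :=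
            hsub (fun ω => g ω + lam * X ω) (fun ω => (-lam) * X ω)
        _ = E (fun ω => g ω + lam * X ω) := by rw [Elin (-lam), add_zero]
  have Econst : ∀ (c : ℝ) (g : Ω → ℝ), E (fun ω => c + g ω) = c + E g := by
    intro c g
    apply le_antisymm
    · have := hsub (fun _ => c) g
      rw [hconst c] at this
      exact this
    · have h2 : E g ≤ (-c) + E (fun ω => c + g ω) := by
        have e : g = fun ω => (fun _ : Ω => -c) ω + ((fun ω => c + g ω) ω) := by
          funext ω; simp
        calc E g = E (fun ω => (fun _ : Ω => -c) ω + ((fun ω => c + g ω) ω)) := by rw [← e]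
          _ ≤ E (fun _ => -c) + E (fun ω => c + g ω) := hsub _ _
          _ = (-c) + E (fun ω => c + g ω) := by rw [hconst (-c)]
      linarith
  have Ediff : ∀ U V : Ω → ℝ, |E U - E V| ≤ E (fun ω => |U ω - V ω|) := by
    intro U V
    have h1 : E U ≤ E V + E (fun ω => |U ω - V ω|) := by
      have e : U = fun ω => V ω + (U ω - V ω) := by funext ω; ring
      calc E U = E (fun ω => V ω + ((fun ω => U ω - V ω) ω)) := by rw [← e]
        _ ≤ E V + E (fun ω => U ω - V ω) := hsub _ _
        _ ≤ E V + E (fun ω => |U ω - V ω|) := by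
            have := hmono (fun ω => U ω - V ω) (fun ω => |U ω - V ω|)
              (fun ω => le_abs_self _)
            linarith
    have h2 : E V ≤ E U + E (fun ω => |U ω - V ω|) := by
      have e : V = fun ω => U ω + (V ω - U ω) := by funext ω; ring
      calc E V = E (fun ω => U ω + ((fun ω => V ω - U ω) ω)) := by rw [← e]
        _ ≤ E U + E (fun ω => V ω - U ω) := hsub _ _
        _ ≤ E U + E (fun ω => |U ω - V ω|) := by
            have := hmono (fun ω => V ω - U ω) (fun ω => |U ω - V ω|)
              (fun ω => (le_abs_self _).trans (le_of_eq (abs_sub_comm _ _)))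
            linarith
    rw [abs_le]
    constructor <;> linarith
  -- the functions
  set W : Ω → ℝ := fun ω => deriv ψ x * Y ω + (1 / 2) * deriv (deriv ψ) x * (X ω) ^ 2 with hW
  set U : Ω → ℝ := fun ω => ψ (x + σ * X ω + Δ * Y ω) with hU
  set V : Ω → ℝ := fun ω => ψ x + (Δ * W ω + (σ * deriv ψ x) * X ω) with hV
  have hEV : E V = ψ x + Δ * E W := by
    rw [hV]
    rw [Econst (ψ x) (fun ω => Δ * W ω + (σ * deriv ψ x) * X ω)]
    rw [EaddX (fun ω => Δ * W ω) (σ * deriv ψ x)]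
    rw [hpos Δ hΔ0.le W]
  -- pointwise bound
  have hptw : ∀ ω, |U ω - V ω| ≤
      Δ * σ * C3 * |X ω| ^ 3 + (Δ * σ * C2 * |X ω| ^ 2 + Δ * σ * C2 * |Y ω| ^ 2) := by
    intro ω
    have h := pointwise_est hd0 hd1 hd2 hC2 hC3 hσ0 hσ1 hσ2 x (X ω) (Y ω)
    simp only [hU, hV, hW]
    exact h
  -- expectation bound
  have hEfinal : E (fun ω => |U ω - V ω|) ≤
      Δ * σ * C3 * MX3 + (Δ * σ * C2 * MX2 + Δ * σ * C2 * MY2) := by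
    have hK3 : 0 ≤ Δ * σ * C3 := by positivity
    have hK2 : 0 ≤ Δ * σ * C2 := by positivity
    calc E (fun ω => |U ω - V ω|)
        ≤ E (fun ω => Δ * σ * C3 * |X ω| ^ 3
            + (Δ * σ * C2 * |X ω| ^ 2 + Δ * σ * C2 * |Y ω| ^ 2)) := hmono _ _ hptw
      _ ≤ E (fun ω => Δ * σ * C3 * |X ω| ^ 3)
            + E (fun ω => Δ * σ * C2 * |X ω| ^ 2 + Δ * σ * C2 * |Y ω| ^ 2) := hsub _ _
      _ ≤ E (fun ω => Δ * σ * C3 * |X ω| ^ 3)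
            + (E (fun ω => Δ * σ * C2 * |X ω| ^ 2) + E (fun ω => Δ * σ * C2 * |Y ω| ^ 2)) := by
          have := hsub (fun ω => Δ * σ * C2 * |X ω| ^ 2) (fun ω => Δ * σ * C2 * |Y ω| ^ 2)
          linarith
      _ = Δ * σ * C3 * MX3 + (Δ * σ * C2 * MX2 + Δ * σ * C2 * MY2) := by
          rw [hpos _ hK3 (fun ω => |X ω| ^ 3), hpos _ hK2 (fun ω => |X ω| ^ 2),
            hpos _ hK2 (fun ω => |Y ω| ^ 2), hMX3, hMX2, hMY2]
  have hmain : |E U - E V| ≤ Δ * σ * C3 * MX3 + (Δ * σ * C2 * MX2 + Δ * σ * C2 * MY2) :=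
    le_trans (Ediff U V) hEfinal
  rw [hEV] at hmain
  -- final arithmetic
  have hgoal : (E U - ψ x) / Δ - E W = (E U - (ψ x + Δ * E W)) / Δ := by
    field_simp
    ring
  rw [hgoal, abs_div, abs_of_pos hΔ0, div_le_iff₀ hΔ0]
  calc |E U - (ψ x + Δ * E W)| ≤ Δ * σ * C3 * MX3 + (Δ * σ * C2 * MX2 + Δ * σ * C2 * MY2) :=
        hmain
    _ = (σ * C3 * MX3 + σ * C2 * (MX2 + MY2)) * Δ := by ring
end

section
/- Let Ê be a sublinear expectation, and let X, Y be real random variables with Ê[X] = Ê[−X] = 0, Ê[|X|^(2+α)] = M_X^(2+α) < ∞ for some α ∈ (0,1), Ê[|X|²] = M_X², Ê[|Y|²] = M_Y² < ∞. Let ψ : ℝ → ℝ be C² with bounded ψ, ψ', ψ'', and ψ'' α-Hölder continuous with seminorm [ψ'']_α. Define G(p, A) := Ê[pY + (1/2)A X²]. Then for all Δ ∈ (0,1) and x ∈ ℝ: |(Ê[ψ(x + √Δ X + Δ Y)] − ψ(x))/Δ − G(ψ'(x), ψ''(x))| ≤ Δ^(α/2)·[ψ'']_α·M_X^(2+α)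 + √Δ·‖ψ''‖_∞·(M_X² + M_Y²). -/
/-!
Put `s = √Δ X` and `k = Δ Y`. Pointwise, the error
`ψ(x+s+k) - ψ(x) - (s+k) ψ'(x) - s² ψ''(x)/2` splits into the first-order Taylor remainder of `ψ`
at `x+s` (at most `‖ψ''‖ k²/2`), the drift correction `k (ψ'(x+s) - ψ'(x))` (at most
`‖ψ''‖ |k| |s|`) and the second-order Taylor remainder at `x` (at most `[ψ'']_α |s|^(2+α)`).
After scaling, each of these is `Δ` times a moment of `X` or `Y`. Since `X` has no mean
uncertainty, `Ê` is additive along the linear term `√Δ ψ'(x) X`, so the expectation of the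
Taylor polynomial is exactly `ψ(x) + Δ G(ψ'(x), ψ''(x))`, and monotonicity and subadditivity
of `Ê` carry the pointwise bound over to the expectations.
-/

open Set

structure IsSublinearExpectation {Ω : Type*} (E : (Ω → ℝ) → ℝ) : Prop where
  mono : ∀ X Y : Ω → ℝ, (∀ ω, X ω ≤ Y ω) → E X ≤ E Y
  const : ∀ c : ℝ, E (fun _ => c) = c
  subadd : ∀ X Y : Ω → ℝ, E (fun ω => X ω + Y ω) ≤ E X + E Y
  pos_homog : ∀ c : ℝ, 0 ≤ c → ∀ X : Ω → ℝ, E (fun ω => c * X ω) = c * E X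

namespace IsSublinearExpectation

variable {Ω : Type*} {E : (Ω → ℝ) → ℝ}

theorem add_eq_add_of_neg_eq_neg (hE : IsSublinearExpectation E) (X : Ω → ℝ)
    (hX : E (fun ω => -X ω) = -E X) (W : Ω → ℝ) :
    E (fun ω => X ω + W ω) = E X + E W := by
  refine le_antisymm (hE.subadd X W) ?_
  have h := hE.subadd (fun ω => X ω + W ω) (fun ω => -X ω)
  simp only [add_neg_cancel_comm, hX] at h
  linarith

theorem const_add (hE : IsSublinearExpectation E) (c : ℝ) (W : Ω → ℝ) :
    E (fun ω => c + W ω) = c + E W := by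
  rw [hE.add_eq_add_of_neg_eq_neg (fun _ => c) (by simp only [hE.const]) W, hE.const]

theorem mul_eq_zero_of_mean_zero (hE : IsSublinearExpectation E) {X : Ω → ℝ} (hX : E X = 0)
    (hX' : E (fun ω => -X ω) = 0) (c : ℝ) : E (fun ω => c * X ω) = 0 := by
  rcases le_total 0 c with hc | hc
  · rw [hE.pos_homog c hc X, hX, mul_zero]
  · have h := hE.pos_homog (-c) (neg_nonneg.2 hc) (fun ω => -X ω)
    simpa [hX'] using h

theorem mul_add_mul_le (hE : IsSublinearExpectation E) (U V : Ω → ℝ) {a b : ℝ} (ha : 0 ≤ a)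
    (hb : 0 ≤ b) :
    E (fun ω => a * U ω + b * V ω) ≤ a * E U + b * E V := by
  simpa only [hE.pos_homog a ha, hE.pos_homog b hb] using
    hE.subadd (fun ω => a * U ω) (fun ω => b * V ω)

theorem abs_sub_le (hE : IsSublinearExpectation E) {f g B : Ω → ℝ}
    (h : ∀ ω, |f ω - g ω| ≤ B ω) :
    |E f - E g| ≤ E B := by
  have hf : E f ≤ E g + E B :=
    (hE.mono f _ fun ω => by linarith [(abs_le.1 (h ω)).2]).trans (hE.subadd g B)
  have hg : E g ≤ E f + E B :=
    (hE.mono g _ fun ω => by linarith [(abs_le.1 (h ω)).1]).trans (hE.subadd f B)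
  exact abs_le.2 ⟨by linarith, by linarith⟩

end IsSublinearExpectation

theorem abs_sub_le_of_abs_deriv_le_rpow {F F' : ℝ → ℝ} {K p : ℝ} (hp : 0 ≤ p)
    (hF : ∀ v, HasDerivAt F (F' v) v) (hF' : ∀ v, |F' v| ≤ K * |v| ^ p) (u : ℝ) :
    |F u - F 0| ≤ K * |u| ^ (p + 1) / (p + 1) := by
  wlog hu : 0 ≤ u generalizing F F' u
  · have hneg := this (F := fun v => F (-v)) (F' := fun v => -F' (-v))
      (fun v => ((hF (-v)).comp v (hasDerivAt_neg v)).congr_deriv (by ring))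
      (fun v => by simpa using hF' (-v)) (-u) (by linarith)
    simpa using hneg
  have hB : ∀ v, HasDerivAt (fun v => K * v ^ (p + 1) / (p + 1)) (K * v ^ p) v := by
    intro v
    refine (((Real.hasDerivAt_rpow_const (Or.inr (by linarith))).const_mul K).div_const
      (p + 1)).congr_deriv ?_
    rw [add_sub_cancel_right]
    field_simp
  have key := image_norm_le_of_norm_deriv_right_le_deriv_boundary (f := fun v => F v - F 0)
    (a := 0) (b := u)
    (fun v _ => (hF v).continuousAt.continuousWithinAt.sub continuousWithinAt_const)
    (fun v _ => ((hF v).sub_const (F 0)).hasDerivWithinAt)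
    (by simp [Real.zero_rpow (by linarith : p + 1 ≠ 0)]) hB
    (fun v hv => by simpa [abs_of_nonneg hv.1] using hF' v) (right_mem_Icc.2 hu)
  simpa [abs_of_nonneg hu] using key

section Taylor

variable {f f' f'' : ℝ → ℝ} {H α C : ℝ}

theorem nonneg_of_abs_sub_le_mul_rpow (hH : ∀ z w, |f z - f w| ≤ H * |z - w| ^ α) :
    0 ≤ H := by
  simpa using (abs_nonneg _).trans (hH 1 0)

theorem abs_taylor_one_le_of_holder (hα : 0 ≤ α) (hf : ∀ z, HasDerivAt f (f' z) z)
    (hH : ∀ z w, |f' z - f' w| ≤ H * |z - w| ^ α) (x u : ℝ) :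
    |f (x + u) - f x - u * f' x| ≤ H * |u| ^ (α + 1) / (α + 1) := by
  have hF : ∀ v, HasDerivAt (fun v => f (x + v) - v * f' x) (f' (x + v) - f' x) v := fun v =>
    (((hf (x + v)).comp_const_add x v).sub ((hasDerivAt_id v).mul_const (f' x))).congr_deriv
      (by simp)
  simpa [sub_right_comm] using
    abs_sub_le_of_abs_deriv_le_rpow hα hF (fun v => by simpa using hH (x + v) x) u

theorem abs_taylor_two_le_of_holder (hα : 0 ≤ α) (hf : ∀ z, HasDerivAt f (f' z) z)
    (hf' : ∀ z, HasDerivAt f' (f'' z) z) (hH : ∀ z w, |f'' z - f'' w| ≤ H * |z - w| ^ α)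
    (x u : ℝ) :
    |f (x + u) - f x - u * f' x - u ^ 2 / 2 * f'' x|
      ≤ H * |u| ^ (α + 2) / ((α + 1) * (α + 2)) := by
  have hF : ∀ v, HasDerivAt (fun v => f (x + v) - v * f' x - v ^ 2 / 2 * f'' x)
      (f' (x + v) - f' x - v * f'' x) v := fun v =>
    ((((hf (x + v)).comp_const_add x v).sub ((hasDerivAt_id v).mul_const (f' x))).sub
      (((hasDerivAt_pow 2 v).div_const 2).mul_const (f'' x))).congr_deriv (by simp)
  have key := abs_sub_le_of_abs_deriv_le_rpow (K := H / (α + 1)) (p := α + 1) (by linarith) hF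
    (fun v => by simpa [mul_div_right_comm] using abs_taylor_one_le_of_holder hα hf' hH x v) u
  convert key using 1
  · congr 1
    simp
    ring
  · rw [show α + 1 + 1 = α + 2 by ring]
    field_simp

theorem abs_taylor_two_step_le (hα : 0 ≤ α) (hf : ∀ z, HasDerivAt f (f' z) z)
    (hf' : ∀ z, HasDerivAt f' (f'' z) z) (hH : ∀ z w, |f'' z - f'' w| ≤ H * |z - w| ^ α)
    (hC : ∀ z, |f'' z| ≤ C) (x s k : ℝ) :
    |f (x + s + k) - f x - (s + k) * f' x - s ^ 2 / 2 * f'' x|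
      ≤ H * |s| ^ (α + 2) + C * (k ^ 2 / 2 + |k| * |s|) := by
  have hLip : ∀ z w, |f' z - f' w| ≤ C * |z - w| ^ (1 : ℝ) := fun z w => by
    simpa [Real.norm_eq_abs] using Convex.norm_image_sub_le_of_norm_hasDerivWithin_le
      (fun v _ => (hf' v).hasDerivWithinAt) (fun v _ => hC v) convex_univ (mem_univ w)
      (mem_univ z)
  have hstep : |f (x + s + k) - f (x + s) - k * f' (x + s)| ≤ C * (k ^ 2 / 2) := by
    simpa [mul_div_assoc, one_add_one_eq_two] using
      abs_taylor_one_le_of_holder zero_le_one hf hLip (x + s) k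
  have hdrift : |k * (f' (x + s) - f' x)| ≤ C * (|k| * |s|) := by
    rw [abs_mul, mul_left_comm]
    exact mul_le_mul_of_nonneg_left (by simpa using hLip (x + s) x) (abs_nonneg k)
  have hdiff : |f (x + s) - f x - s * f' x - s ^ 2 / 2 * f'' x| ≤ H * |s| ^ (α + 2) := by
    have hH0 := nonneg_of_abs_sub_le_mul_rpow hH
    refine (abs_taylor_two_le_of_holder hα hf hf' hH x s).trans (div_le_self (by positivity) ?_)
    nlinarith
  calc _ = |(f (x + s + k) - f (x + s) - k * f' (x + s)) + k * (f' (x + s) - f' x)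
          + (f (x + s) - f x - s * f' x - s ^ 2 / 2 * f'' x)| := by ring_nf
    _ ≤ _ := by
      refine (abs_add_three _ _ _).trans ?_
      linarith

theorem abs_taylor_diffusion_step_le (hα : 0 ≤ α) (hf : ∀ z, HasDerivAt f (f' z) z)
    (hf' : ∀ z, HasDerivAt f' (f'' z) z) (hH : ∀ z w, |f'' z - f'' w| ≤ H * |z - w| ^ α)
    (hC : ∀ z, |f'' z| ≤ C) {Δ : ℝ} (hΔ0 : 0 ≤ Δ) (hΔ1 : Δ ≤ 1) (x ξ η : ℝ) :
    |f (x + √Δ * ξ + Δ * η) - (f x + (√Δ * f' x * ξ + Δ * (f' x * η + 1 / 2 * f'' x * ξ ^ 2)))|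
      ≤ Δ * (Δ ^ (α / 2) * H * |ξ| ^ (2 + α) + √Δ * C * (|ξ| ^ 2 + |η| ^ 2)) := by
  have key := abs_taylor_two_step_le hα hf hf' hH hC x (√Δ * ξ) (Δ * η)
  have hsq : √Δ ^ 2 = Δ := Real.sq_sqrt hΔ0
  have hC0 : 0 ≤ C := (abs_nonneg _).trans (hC 0)
  have hholder : |√Δ * ξ| ^ (α + 2) = Δ * Δ ^ (α / 2) * |ξ| ^ (2 + α) := by
    rw [abs_mul, abs_of_nonneg (Real.sqrt_nonneg Δ),
      Real.mul_rpow (Real.sqrt_nonneg Δ) (abs_nonneg ξ), Real.sqrt_eq_rpow,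
      ← Real.rpow_mul hΔ0, show 1 / 2 * (α + 2) = 1 + α / 2 by ring,
      Real.rpow_add' hΔ0 (by positivity), Real.rpow_one, add_comm α]
  have hΔ_le : Δ ≤ √Δ := (Real.le_sqrt hΔ0 hΔ0).2 (by nlinarith)
  have hrest : C * ((Δ * η) ^ 2 / 2 + |Δ * η| * |√Δ * ξ|)
      ≤ Δ * (√Δ * C * (|ξ| ^ 2 + |η| ^ 2)) := by
    rw [abs_mul, abs_mul, abs_of_nonneg hΔ0, abs_of_nonneg (Real.sqrt_nonneg Δ)]
    have hquad : Δ ^ 2 * η ^ 2 ≤ Δ * √Δ * |η| ^ 2 := by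
      rw [sq_abs, sq]
      exact mul_le_mul_of_nonneg_right (mul_le_mul_of_nonneg_left hΔ_le hΔ0) (sq_nonneg η)
    have hamgm : 2 * (|η| * |ξ|) ≤ |ξ| ^ 2 + |η| ^ 2 := by nlinarith [sq_nonneg (|ξ| - |η|)]
    have ht : 0 ≤ C * (Δ * √Δ) := by positivity
    nlinarith [mul_le_mul_of_nonneg_left hquad hC0, mul_le_mul_of_nonneg_left hamgm ht]
  calc _ = |f (x + √Δ * ξ + Δ * η) - f x - (√Δ * ξ + Δ * η) * f' x
          - (√Δ * ξ) ^ 2 / 2 * f'' x| := by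
        rw [mul_pow, hsq]; ring_nf
    _ ≤ _ := by
      rw [hholder] at key
      linarith

end Taylor

theorem stmt_10_general {Ω : Type*} (E : (Ω → ℝ) → ℝ)
    (hmono : ∀ X Y : Ω → ℝ, (∀ ω, X ω ≤ Y ω) → E X ≤ E Y)
    (hconst : ∀ c : ℝ, E (fun _ => c) = c)
    (hsub : ∀ X Y : Ω → ℝ, E (fun ω => X ω + Y ω) ≤ E X + E Y)
    (hpos : ∀ lam : ℝ, 0 ≤ lam → ∀ X : Ω → ℝ, E (fun ω => lam * X ω) = lam * E X)
    (X Y : Ω → ℝ)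
    (hX0 : E X = 0) (hX0' : E (fun ω => -X ω) = 0)
    (α : ℝ) (hα0 : 0 < α)
    (MX2α MX2 MY2 : ℝ)
    (hMX2α : E (fun ω => |X ω| ^ (2 + α)) = MX2α)
    (hMX2 : E (fun ω => |X ω| ^ 2) = MX2)
    (hMY2 : E (fun ω => |Y ω| ^ 2) = MY2)
    (ψ : ℝ → ℝ) (hψ : ContDiff ℝ 2 ψ)
    (Hα : ℝ)
    (hHα : ∀ z w, |deriv (deriv ψ) z - deriv (deriv ψ) w| ≤ Hα * |z - w| ^ α)
    (C2 : ℝ) (hC2 : ∀ z, |deriv (deriv ψ) z| ≤ C2)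
    (Δ : ℝ) (hΔ0 : 0 < Δ) (hΔ1 : Δ < 1) (x : ℝ) :
    |(E (fun ω => ψ (x + Real.sqrt Δ * X ω + Δ * Y ω)) - ψ x) / Δ
        - E (fun ω => deriv ψ x * Y ω + (1 / 2) * deriv (deriv ψ) x * (X ω) ^ 2)|
      ≤ Δ ^ (α / 2) * Hα * MX2α + Real.sqrt Δ * C2 * (MX2 + MY2) := by
  have hE : IsSublinearExpectation E := ⟨hmono, hconst, hsub, hpos⟩
  have hψ' : ∀ z, HasDerivAt ψ (deriv ψ z) z := fun z =>
    (hψ.differentiable (by norm_num) z).hasDerivAt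
  have hψ'' : ∀ z, HasDerivAt (deriv ψ) (deriv (deriv ψ) z) z := fun z =>
    ((by simpa using hψ.differentiable_iteratedDeriv 1 (by norm_num) :
      Differentiable ℝ (deriv ψ)) z).hasDerivAt
  have hX_mean (c : ℝ) : E (fun ω => c * X ω) = 0 := hE.mul_eq_zero_of_mean_zero hX0 hX0' c
  have hmean : E (fun ω => ψ x + (√Δ * deriv ψ x * X ω
      + Δ * (deriv ψ x * Y ω + 1 / 2 * deriv (deriv ψ) x * X ω ^ 2)))
      = ψ x + Δ * E (fun ω => deriv ψ x * Y ω + 1 / 2 * deriv (deriv ψ) x * X ω ^ 2) := by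
    rw [hE.const_add, hE.add_eq_add_of_neg_eq_neg _ (by simp only [← neg_mul, hX_mean, neg_zero]),
      hX_mean, zero_add, hE.pos_homog Δ hΔ0.le]
  have hmoments : E (fun ω => Δ * (Δ ^ (α / 2) * Hα * |X ω| ^ (2 + α)
      + √Δ * C2 * (|X ω| ^ 2 + |Y ω| ^ 2)))
      ≤ Δ * (Δ ^ (α / 2) * Hα * MX2α + √Δ * C2 * (MX2 + MY2)) := by
    have hHα0 := nonneg_of_abs_sub_le_mul_rpow hHα
    have hC20 : 0 ≤ C2 := (abs_nonneg _).trans (hC2 0)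
    rw [hE.pos_homog Δ hΔ0.le, ← hMX2α, ← hMX2, ← hMY2]
    gcongr
    refine (hE.mul_add_mul_le _ _ (by positivity) (by positivity)).trans ?_
    gcongr
    exact hE.subadd _ _
  have hkey := (hE.abs_sub_le fun ω => abs_taylor_diffusion_step_le hα0.le hψ' hψ'' hHα hC2
    hΔ0.le hΔ1.le x (X ω) (Y ω)).trans hmoments
  rw [hmean] at hkey
  rw [div_sub' hΔ0.ne', abs_div, abs_of_pos hΔ0, div_le_iff₀ hΔ0, sub_sub, mul_comm _ Δ]
  exact hkey

theorem stmt_10 {Ω : Type*} (E : (Ω → ℝ) → ℝ)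
    (hmono : ∀ X Y : Ω → ℝ, (∀ ω, X ω ≤ Y ω) → E X ≤ E Y)
    (hconst : ∀ c : ℝ, E (fun _ => c) = c)
    (hsub : ∀ X Y : Ω → ℝ, E (fun ω => X ω + Y ω) ≤ E X + E Y)
    (hpos : ∀ lam : ℝ, 0 ≤ lam → ∀ X : Ω → ℝ, E (fun ω => lam * X ω) = lam * E X)
    (X Y : Ω → ℝ)
    (hX0 : E X = 0) (hX0' : E (fun ω => -X ω) = 0)
    (α : ℝ) (hα0 : 0 < α) (hα1 : α < 1)
    (MX2α MX2 MY2 : ℝ)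
    (hMX2α : E (fun ω => |X ω| ^ (2 + α)) = MX2α)
    (hMX2 : E (fun ω => |X ω| ^ 2) = MX2)
    (hMY2 : E (fun ω => |Y ω| ^ 2) = MY2)
    (ψ : ℝ → ℝ) (hψ : ContDiff ℝ 2 ψ)
    (Cψ : ℝ) (hψbdd : ∀ z, |ψ z| ≤ Cψ ∧ |deriv ψ z| ≤ Cψ ∧ |deriv (deriv ψ) z| ≤ Cψ)
    (Hα : ℝ)
    (hHα : ∀ z w, |deriv (deriv ψ) z - deriv (deriv ψ) w| ≤ Hα * |z - w| ^ α)
    (C2 : ℝ) (hC2 : ∀ z, |deriv (deriv ψ) z| ≤ C2)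
    (Δ : ℝ) (hΔ0 : 0 < Δ) (hΔ1 : Δ < 1) (x : ℝ) :
    |(E (fun ω => ψ (x + Real.sqrt Δ * X ω + Δ * Y ω)) - ψ x) / Δ
        - E (fun ω => deriv ψ x * Y ω + (1 / 2) * deriv (deriv ψ) x * (X ω) ^ 2)|
      ≤ Δ ^ (α / 2) * Hα * MX2α + Real.sqrt Δ * C2 * (MX2 + MY2) :=
  stmt_10_general E hmono hconst hsub hpos X Y hX0 hX0' α hα0 MX2α MX2 MY2 hMX2α hMX2 hMY2 ψ hψ Hα
    hHα C2 hC2 Δ hΔ0 hΔ1 x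
end

section
/- Comparison principle for the recursive scheme: Let T ≥ 1, Δ ∈ (0,1), and let S(Δ,x,p,v) = (p − Ê[v(x+√Δ X+Δ Y)])/Δ be the monotone scheme operator. Suppose u, w : [0,T]×ℝ^d → ℝ are lower-bounded continuous functions with S(Δ,x,u(t,x),u(t−Δ,·)) ≤ h₁(t,x) and S(Δ,x,w(t,x),w(t−Δ,·)) ≥ h₂(t,x) for all (t,x) ∈ (Δ,T]×ℝ^d, where h₁, h₂ are lower-bounded continuous. Then for all (t,x) ∈ [0,T]×ℝ^d: u(t,x) − w(t,x) ≤ sup over [0,Δ]×ℝ^d of (u−w)⁺ + t·sup over (Δ,T]×ℝ^d of (h₁−h₂)⁺. -/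
theorem stmt_13 {Ω : Type*} (d : ℕ) (E : (Ω → ℝ) → ℝ)
    (hmono : ∀ X Y : Ω → ℝ, (∀ ω, X ω ≤ Y ω) → E X ≤ E Y)
    (hconst : ∀ c : ℝ, E (fun _ => c) = c)
    (hsub : ∀ X Y : Ω → ℝ, E (fun ω => X ω + Y ω) ≤ E X + E Y)
    (hpos : ∀ lam : ℝ, 0 ≤ lam → ∀ X : Ω → ℝ, E (fun ω => lam * X ω) = lam * E X)
    (X Y : Ω → EuclideanSpace ℝ (Fin d))
    (T Δ : ℝ) (hT : 1 ≤ T) (hΔ0 : 0 < Δ) (hΔ1 : Δ < 1)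
    (S : ℝ → EuclideanSpace ℝ (Fin d) → ℝ → (EuclideanSpace ℝ (Fin d) → ℝ) → ℝ)
    (hS : ∀ Δ' x p v, S Δ' x p v
      = (p - E (fun ω => v (x + Real.sqrt Δ' • X ω + Δ' • Y ω))) / Δ')
    (u w h₁ h₂ : ℝ → EuclideanSpace ℝ (Fin d) → ℝ)
    (hucont : Continuous (Function.uncurry u)) (hwcont : Continuous (Function.uncurry w))
    (hulb : ∃ m : ℝ, ∀ t x, m ≤ u t x) (hwlb : ∃ m : ℝ, ∀ t x, m ≤ w t x)
    (hh₁cont : Continuous (Function.uncurry h₁)) (hh₂cont : Continuous (Function.uncurry h₂))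
    (hh₁lb : ∃ m : ℝ, ∀ t x, m ≤ h₁ t x) (hh₂lb : ∃ m : ℝ, ∀ t x, m ≤ h₂ t x)
    (hsub' : ∀ t x, Δ < t → t ≤ T → S Δ x (u t x) (u (t - Δ)) ≤ h₁ t x)
    (hsuper : ∀ t x, Δ < t → t ≤ T → S Δ x (w t x) (w (t - Δ)) ≥ h₂ t x)
    (A B : ℝ)
    (hA : ∀ t x, 0 ≤ t → t ≤ Δ → max (u t x - w t x) 0 ≤ A)
    (hB : ∀ t x, Δ < t → t ≤ T → max (h₁ t x - h₂ t x) 0 ≤ B) :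
    ∀ t x, 0 ≤ t → t ≤ T → u t x - w t x ≤ A + t * B := by

  have hB0 : 0 ≤ B :=
    le_trans (le_max_right _ _) (hB T 0 (lt_of_lt_of_le hΔ1 hT) le_rfl)
  have key : ∀ n : ℕ, ∀ t x, 0 ≤ t → t ≤ T → t ≤ n * Δ →
      u t x - w t x ≤ A + t * B := by
    intro n
    induction n with
    | zero =>
      intro t x ht htT hn
      simp only [Nat.cast_zero, zero_mul] at hn
      have ht0 : t = 0 := le_antisymm hn ht
      subst ht0
      have := le_trans (le_max_left (u 0 x - w 0 x) 0) (hA 0 x le_rfl hΔ0.le)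
      linarith
    | succ n ih =>
      intro t x ht htT hn
      by_cases hcase : t ≤ Δ
      · have h1 := le_trans (le_max_left (u t x - w t x) 0) (hA t x ht hcase)
        nlinarith [mul_nonneg ht hB0]
      · push_neg at hcase
        have ht' : 0 ≤ t - Δ := by linarith
        have htT' : t - Δ ≤ T := by linarith
        have hn' : t - Δ ≤ n * Δ := by push_cast at hn ⊢; linarith
        have hu := hsub' t x hcase htT
        have hw := hsuper t x hcase htT
        rw [hS] at hu hw
        set pt : Ω → EuclideanSpace ℝ (Fin d) :=
          fun ω => x + Real.sqrt Δ • X ω + Δ • Y ω with hpt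
        have hu' : u t x - E (fun ω => u (t - Δ) (pt ω)) ≤ Δ * h₁ t x := by
          have := (div_le_iff₀ hΔ0).mp hu; linarith
        have hw' : Δ * h₂ t x ≤ w t x - E (fun ω => w (t - Δ) (pt ω)) := by
          have := (le_div_iff₀ hΔ0).mp hw; linarith
        have hEsub : E (fun ω => u (t - Δ) (pt ω)) - E (fun ω => w (t - Δ) (pt ω))
            ≤ E (fun ω => u (t - Δ) (pt ω) - w (t - Δ) (pt ω)) := by
          have h := hsub (fun ω => u (t - Δ) (pt ω) - w (t - Δ) (pt ω))
            (fun ω => w (t - Δ) (pt ω))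
          have heq : (fun ω => (u (t - Δ) (pt ω) - w (t - Δ) (pt ω)) + w (t - Δ) (pt ω))
              = fun ω => u (t - Δ) (pt ω) := by funext ω; ring
          rw [heq] at h
          linarith
        have hmono' : E (fun ω => u (t - Δ) (pt ω) - w (t - Δ) (pt ω))
            ≤ A + (t - Δ) * B := by
          calc E (fun ω => u (t - Δ) (pt ω) - w (t - Δ) (pt ω))
              ≤ E (fun _ => A + (t - Δ) * B) :=
                hmono _ _ (fun ω => ih (t - Δ) (pt ω) ht' htT' hn')
            _ = A + (t - Δ) * B := hconst _
        have hΔB : Δ * h₁ t x - Δ * h₂ t x ≤ Δ * B := by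
          have h := le_trans (le_max_left (h₁ t x - h₂ t x) 0) (hB t x hcase htT)
          nlinarith
        nlinarith
  intro t x ht htT
  obtain ⟨n, hn⟩ := exists_nat_ge (t / Δ)
  exact key n t x ht htT (by rw [div_le_iff₀ hΔ0] at hn; linarith)
end

section
/- Time-regularity of the scheme solution at the grid: Let Ê be a sublinear expectation, X, Y ∈ ℝ^d random vectors with Ê[⟨p,X⟩] = 0 for all p (no mean uncertainty), Ê[|X|²] = M_X² < ∞, Ê[|Y|²] = M_Y² < ∞, and φ lower bounded β-Hölder with constant C_φ, β ∈ (0,1]. Let u^Δ be the recursive scheme solution as above, Δ ∈ (0,1), T ≥ 1, and set N := 2M_X² + 3M_Y². Then for τ a multiple of Δ with τ < T, and k ∈ ℕ with τ + kΔ ≤ T, a,b chosen as a = C_φ(β/2)ε, b = C_φ((2−β)/2)ε^(−β/(2−β)) for any ε > 0, one has for all x, y ∈ ℝ^d: u^Δ(τ + kΔ, x) ≤ u^Δ(τ, y) + a(1+Δ)^k |x−y|² + a N e^T kΔ + b. -/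
/-!
Writing `S v x = Ê[v (x + √Δ X + Δ Y)]` for one step of the scheme, the grid values satisfy
`u((m+1)Δ) = S u(mΔ)`. Young's inequality turns the `β`-Hölder bound of `φ` into
`φ x ≤ φ y + a|x-y|² + b`, and since `S` commutes with translations and preserves constants,
this quadratic modulus passes unchanged to every grid time. For the time increment fix `y`
and propagate `u(jΔ + kΔ) x ≤ u(jΔ) y + α_k|x-y|² + γ_k` through `S`: expanding the square,
the cross term `2√Δ⟨x-y, X⟩` has zero sublinear expectation (no mean uncertainty), which
leaves `α_{k+1} = (1+Δ)α_k` and an additive error `α_k Δ N`. Finally `(1+Δ)^k ≤ e^{kΔ} ≤ e^T`.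
-/

open Real

lemma rpow_le_mul_sq_add_rpow {β ε r : ℝ} (hβ0 : 0 < β) (hβ2 : β < 2) (hε : 0 < ε)
    (hr : 0 ≤ r) :
    r ^ β ≤ β / 2 * ε * r ^ 2 + (2 - β) / 2 * ε ^ (-(β / (2 - β))) := by
  have h2β : 0 < 2 - β := by linarith
  have amgm := geom_mean_le_arith_mean2_weighted (by positivity : 0 ≤ β / 2)
    (by positivity : 0 ≤ (2 - β) / 2) (by positivity : 0 ≤ ε * r ^ 2)
    (rpow_nonneg hε.le (-(β / (2 - β)))) (by ring)
  have h1 : (ε * r ^ 2) ^ (β / 2) = ε ^ (β / 2) * r ^ β := by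
    rw [mul_rpow hε.le (by positivity), ← rpow_natCast, ← rpow_mul hr]
    congr 2; push_cast; ring
  have h2 : (ε ^ (-(β / (2 - β)))) ^ ((2 - β) / 2) = ε ^ (-(β / 2)) := by
    rw [← rpow_mul hε.le]; congr 1; field_simp
  rw [h1, h2, mul_comm (ε ^ (β / 2)), mul_assoc, ← rpow_add hε, add_neg_cancel, rpow_zero,
    mul_one] at amgm
  linarith

lemma norm_add_smul_add_smul_sq_le {V : Type*} [NormedAddCommGroup V] [InnerProductSpace ℝ V]
    {Δ : ℝ} (hΔ0 : 0 ≤ Δ) (hΔ1 : Δ ≤ 1) (z u v : V) :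
    ‖z + √Δ • u + Δ • v‖ ^ 2
      ≤ (1 + Δ) * ‖z‖ ^ 2 + Δ * (2 * ‖u‖ ^ 2 + 3 * ‖v‖ ^ 2) + 2 * √Δ * inner ℝ z u := by
  have hr0 : 0 ≤ √Δ := sqrt_nonneg Δ
  have hr1 : √Δ ≤ 1 := sqrt_le_one.mpr hΔ1
  have hexpand : ‖z + √Δ • u + Δ • v‖ ^ 2 = ‖z‖ ^ 2 + Δ * ‖u‖ ^ 2 + Δ ^ 2 * ‖v‖ ^ 2
      + 2 * √Δ * inner ℝ z u + 2 * Δ * inner ℝ z v + 2 * (√Δ * Δ) * inner ℝ u v := by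
    simp only [norm_add_sq_real, inner_add_left, real_inner_smul_left, real_inner_smul_right,
      norm_smul, Real.norm_eq_abs, abs_of_nonneg hr0, abs_of_nonneg hΔ0, mul_pow,
      sq_sqrt hΔ0]
    ring
  have hzv : 2 * inner ℝ z v ≤ ‖z‖ ^ 2 + ‖v‖ ^ 2 := by
    nlinarith [real_inner_le_norm z v, sq_nonneg (‖z‖ - ‖v‖)]
  have huv : 2 * inner ℝ u v ≤ ‖u‖ ^ 2 + ‖v‖ ^ 2 := by
    nlinarith [real_inner_le_norm u v, sq_nonneg (‖u‖ - ‖v‖)]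
  have huv_pos : 0 ≤ ‖u‖ ^ 2 + ‖v‖ ^ 2 := by positivity
  rw [hexpand]
  nlinarith [mul_le_mul_of_nonneg_left hzv hΔ0, mul_le_mul_of_nonneg_left huv
    (mul_nonneg hr0 hΔ0), mul_le_mul_of_nonneg_right hr1 (mul_nonneg hΔ0 huv_pos),
    mul_le_mul_of_nonneg_right (pow_le_pow_left₀ hΔ0 hΔ1 2) (sq_nonneg ‖v‖), hΔ1]

structure IsSublinearExpectation_s15 {Ω : Type*} (E : (Ω → ℝ) → ℝ) : Prop where
  mono : ∀ f g : Ω → ℝ, (∀ ω, f ω ≤ g ω) → E f ≤ E g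
  map_const : ∀ c : ℝ, E (fun _ => c) = c
  map_add_le : ∀ f g : Ω → ℝ, E (fun ω => f ω + g ω) ≤ E f + E g
  map_mul_left : ∀ c : ℝ, 0 ≤ c → ∀ f : Ω → ℝ, E (fun ω => c * f ω) = c * E f

namespace IsSublinearExpectation_s15

variable {Ω : Type*} {E : (Ω → ℝ) → ℝ}

lemma nonneg (hE : IsSublinearExpectation_s15 E) {f : Ω → ℝ} (hf : ∀ ω, 0 ≤ f ω) : 0 ≤ E f :=
  hE.map_const 0 ▸ hE.mono _ _ hf

lemma map_const_add_le (hE : IsSublinearExpectation_s15 E) (c : ℝ) (f : Ω → ℝ) :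
    E (fun ω => c + f ω) ≤ c + E f := by
  simpa only [hE.map_const] using hE.map_add_le (fun _ => c) f

lemma map_const_add_mul_add_le (hE : IsSublinearExpectation_s15 E) (c : ℝ) {A : ℝ} (hA : 0 ≤ A)
    (f g : Ω → ℝ) : E (fun ω => c + A * f ω + g ω) ≤ c + A * E f + E g := by
  calc E (fun ω => c + A * f ω + g ω) ≤ E (fun ω => c + A * f ω) + E g := hE.map_add_le _ g
    _ ≤ c + E (fun ω => A * f ω) + E g := by gcongr; exact hE.map_const_add_le c _
    _ = c + A * E f + E g := by rw [hE.map_mul_left A hA]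

end IsSublinearExpectation_s15

section SchemeConstant

variable {Ω V : Type*} [Norm V] {E : (Ω → ℝ) → ℝ} {X Y : Ω → V}

variable (E X Y) in
def schemeConstant : ℝ := 2 * E (fun ω => ‖X ω‖ ^ 2) + 3 * E (fun ω => ‖Y ω‖ ^ 2)

lemma schemeConstant_nonneg (hE : IsSublinearExpectation_s15 E) : 0 ≤ schemeConstant E X Y := by
  have := hE.nonneg fun ω => sq_nonneg ‖X ω‖
  have := hE.nonneg fun ω => sq_nonneg ‖Y ω‖
  unfold schemeConstant
  positivity

end SchemeConstant

section Scheme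

variable {Ω V : Type*} [NormedAddCommGroup V] [InnerProductSpace ℝ V]
  {E : (Ω → ℝ) → ℝ} {X Y : Ω → V} {Δ : ℝ}

variable (E X Y Δ) in
noncomputable def schemeStep (v : V → ℝ) (x : V) : ℝ :=
  E fun ω => v (x + √Δ • X ω + Δ • Y ω)

lemma schemeStep_le_schemeStep_add (hE : IsSublinearExpectation_s15 E) {v : V → ℝ} {a b : ℝ}
    (hv : ∀ x y, v x ≤ v y + a * ‖x - y‖ ^ 2 + b) (x y : V) :
    schemeStep E X Y Δ v x ≤ schemeStep E X Y Δ v y + a * ‖x - y‖ ^ 2 + b := by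
  calc schemeStep E X Y Δ v x
      ≤ E fun ω => (a * ‖x - y‖ ^ 2 + b) + v (y + √Δ • X ω + Δ • Y ω) := by
        refine hE.mono _ _ fun ω => ?_
        have := hv (x + √Δ • X ω + Δ • Y ω) (y + √Δ • X ω + Δ • Y ω)
        rw [add_sub_add_right_eq_sub, add_sub_add_right_eq_sub] at this
        linarith
    _ ≤ (a * ‖x - y‖ ^ 2 + b) + schemeStep E X Y Δ v y := hE.map_const_add_le _ _
    _ = _ := by ring

lemma schemeStep_le_of_le (hE : IsSublinearExpectation_s15 E)
    (hX : ∀ p : V, E (fun ω => inner ℝ p (X ω)) = 0) (hΔ0 : 0 ≤ Δ) (hΔ1 : Δ ≤ 1)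
    {v : V → ℝ} {y : V} {w α γ : ℝ} (hα : 0 ≤ α) (hv : ∀ x, v x ≤ w + α * ‖x - y‖ ^ 2 + γ)
    (x : V) :
    schemeStep E X Y Δ v x ≤ w + α * (1 + Δ) * ‖x - y‖ ^ 2
      + α * Δ * schemeConstant E X Y + γ := by
  set c := w + α * (1 + Δ) * ‖x - y‖ ^ 2 + γ
  have hpointwise : ∀ ω, v (x + √Δ • X ω + Δ • Y ω) ≤
      c + α * Δ * (2 * ‖X ω‖ ^ 2 + 3 * ‖Y ω‖ ^ 2) + inner ℝ ((2 * √Δ * α) • (x - y)) (X ω) := by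
    intro ω
    have hsq := norm_add_smul_add_smul_sq_le hΔ0 hΔ1 (x - y) (X ω) (Y ω)
    have := hv (x + √Δ • X ω + Δ • Y ω)
    rw [show x + √Δ • X ω + Δ • Y ω - y = x - y + √Δ • X ω + Δ • Y ω by abel] at this
    rw [real_inner_smul_left]
    nlinarith [mul_le_mul_of_nonneg_left hsq hα]
  have hmoment : E (fun ω => 2 * ‖X ω‖ ^ 2 + 3 * ‖Y ω‖ ^ 2) ≤ schemeConstant E X Y := by
    rw [schemeConstant, ← hE.map_mul_left 2 (by norm_num), ← hE.map_mul_left 3 (by norm_num)]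
    exact hE.map_add_le _ _
  calc schemeStep E X Y Δ v x
      ≤ c + α * Δ * E (fun ω => 2 * ‖X ω‖ ^ 2 + 3 * ‖Y ω‖ ^ 2)
        + E (fun ω => inner ℝ ((2 * √Δ * α) • (x - y)) (X ω)) :=
        (hE.mono _ _ hpointwise).trans (hE.map_const_add_mul_add_le c (by positivity) _ _)
    _ ≤ _ := by
        rw [hX]
        linarith [mul_le_mul_of_nonneg_left hmoment (mul_nonneg hα hΔ0)]

lemma le_add_sq_of_schemeStep_seq (hE : IsSublinearExpectation_s15 E) {v : ℕ → V → ℝ}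
    (hv : ∀ m, v (m + 1) = schemeStep E X Y Δ (v m)) {a b : ℝ}
    (h0 : ∀ x y, v 0 x ≤ v 0 y + a * ‖x - y‖ ^ 2 + b) (m : ℕ) (x y : V) :
    v m x ≤ v m y + a * ‖x - y‖ ^ 2 + b := by
  induction m generalizing x y with
  | zero => exact h0 x y
  | succ m ih => rw [hv]; exact schemeStep_le_schemeStep_add hE ih x y

lemma le_of_schemeStep_seq (hE : IsSublinearExpectation_s15 E)
    (hX : ∀ p : V, E (fun ω => inner ℝ p (X ω)) = 0) (hΔ0 : 0 ≤ Δ) (hΔ1 : Δ ≤ 1)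
    {v : ℕ → V → ℝ} (hv : ∀ m, v (m + 1) = schemeStep E X Y Δ (v m)) {a b : ℝ} (ha : 0 ≤ a)
    (y : V) (h0 : ∀ x, v 0 x ≤ v 0 y + a * ‖x - y‖ ^ 2 + b) (k : ℕ) (x : V) :
    v k x ≤ v 0 y + a * (1 + Δ) ^ k * ‖x - y‖ ^ 2
      + a * schemeConstant E X Y * (1 + Δ) ^ k * k * Δ + b := by
  set N := schemeConstant E X Y
  have hN : 0 ≤ N := schemeConstant_nonneg hE
  induction k generalizing x with
  | zero => simpa using h0 x
  | succ k ih =>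
    have ih' : ∀ x, v k x ≤ v 0 y + a * (1 + Δ) ^ k * ‖x - y‖ ^ 2
        + (a * N * (1 + Δ) ^ k * k * Δ + b) := fun x => by linarith [ih x]
    have hgrowth : (1 + Δ) ^ k ≤ (1 + Δ) ^ (k + 1) :=
      pow_le_pow_right₀ (by linarith) k.le_succ
    rw [hv]
    calc schemeStep E X Y Δ (v k) x
        ≤ v 0 y + a * (1 + Δ) ^ k * (1 + Δ) * ‖x - y‖ ^ 2 + a * (1 + Δ) ^ k * Δ * N
          + (a * N * (1 + Δ) ^ k * k * Δ + b) :=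
        schemeStep_le_of_le hE hX hΔ0 hΔ1 (by positivity) ih' x
      _ = v 0 y + a * (1 + Δ) ^ (k + 1) * ‖x - y‖ ^ 2
          + a * N * (k + 1) * Δ * (1 + Δ) ^ k + b := by ring
      _ ≤ v 0 y + a * (1 + Δ) ^ (k + 1) * ‖x - y‖ ^ 2
          + a * N * (k + 1) * Δ * (1 + Δ) ^ (k + 1) + b := by gcongr
      _ = _ := by push_cast; ring

end Scheme

lemma one_add_pow_le_exp {Δ T : ℝ} (hΔ : 0 ≤ Δ) {k : ℕ} (hk : k * Δ ≤ T) :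
    (1 + Δ) ^ k ≤ exp T :=
  calc (1 + Δ) ^ k ≤ exp Δ ^ k := by
        gcongr; linarith [add_one_le_exp Δ]
    _ = exp (k * Δ) := (exp_nat_mul Δ k).symm
    _ ≤ exp T := exp_le_exp.mpr hk

theorem stmt_15_general {Ω : Type*} (d : ℕ) (E : (Ω → ℝ) → ℝ)
    (hmono : ∀ X Y : Ω → ℝ, (∀ ω, X ω ≤ Y ω) → E X ≤ E Y)
    (hconst : ∀ c : ℝ, E (fun _ => c) = c)
    (hsub : ∀ X Y : Ω → ℝ, E (fun ω => X ω + Y ω) ≤ E X + E Y)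
    (hpos : ∀ lam : ℝ, 0 ≤ lam → ∀ X : Ω → ℝ, E (fun ω => lam * X ω) = lam * E X)
    (X Y : Ω → EuclideanSpace ℝ (Fin d))
    (hX0 : ∀ p : EuclideanSpace ℝ (Fin d), E (fun ω => inner ℝ p (X ω)) = (0 : ℝ))
    (MX2 MY2 : ℝ)
    (hMX2 : E (fun ω => ‖X ω‖ ^ 2) = MX2)
    (hMY2 : E (fun ω => ‖Y ω‖ ^ 2) = MY2)
    (φ : EuclideanSpace ℝ (Fin d) → ℝ) (Cφ β : ℝ) (hCφ : 0 < Cφ)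
    (hβ0 : 0 < β) (hβ1 : β ≤ 1)
    (hφ : ∀ x y, |φ x - φ y| ≤ Cφ * ‖x - y‖ ^ β)
    (T Δ : ℝ) (hΔ0 : 0 < Δ) (hΔ1 : Δ < 1)
    (uΔ : ℝ → EuclideanSpace ℝ (Fin d) → ℝ)
    (h0 : ∀ t x, 0 ≤ t → t < Δ → uΔ t x = φ x)
    (hrec : ∀ t x, Δ ≤ t →
      uΔ t x = E (fun ω => uΔ (t - Δ) (x + Real.sqrt Δ • X ω + Δ • Y ω)))
    (N : ℝ) (hN : N = 2 * MX2 + 3 * MY2) :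
    ∀ (j k : ℕ), (j : ℝ) * Δ < T → (j : ℝ) * Δ + (k : ℝ) * Δ ≤ T →
      ∀ ε : ℝ, 0 < ε →
        ∀ x y, uΔ ((j : ℝ) * Δ + (k : ℝ) * Δ) x
          ≤ uΔ ((j : ℝ) * Δ) y
            + (Cφ * (β / 2) * ε) * (1 + Δ) ^ k * ‖x - y‖ ^ 2
            + (Cφ * (β / 2) * ε) * N * Real.exp T * (k : ℝ) * Δ
            + Cφ * ((2 - β) / 2) * ε ^ (-(β / (2 - β))) := by
  intro j k _ hjkT ε hε x y
  have hE : IsSublinearExpectation_s15 E := ⟨hmono, hconst, hsub, hpos⟩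
  have hφ_reg : ∀ x y, φ x ≤ φ y + Cφ * (β / 2) * ε * ‖x - y‖ ^ 2
      + Cφ * ((2 - β) / 2) * ε ^ (-(β / (2 - β))) := fun x y => by
    have := rpow_le_mul_sq_add_rpow hβ0 (by linarith) hε (norm_nonneg (x - y))
    nlinarith [le_abs_self (φ x - φ y), hφ x y, mul_le_mul_of_nonneg_left this hCφ.le]
  set a := Cφ * (β / 2) * ε
  set b := Cφ * ((2 - β) / 2) * ε ^ (-(β / (2 - β)))
  set v : ℕ → EuclideanSpace ℝ (Fin d) → ℝ := fun m => uΔ (m * Δ)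
  have hv : ∀ m, v (m + 1) = schemeStep E X Y Δ (v m) := fun m => funext fun x => by
    have hprev : ((m + 1 : ℕ) : ℝ) * Δ - Δ = m * Δ := by push_cast; ring
    have hm : 0 ≤ (m : ℝ) * Δ := by positivity
    simp only [v, schemeStep]
    rw [hrec _ x (by linarith), hprev]
  have hv_reg := le_add_sq_of_schemeStep_seq hE hv (a := a) (b := b) (fun x y => by
    simpa only [v, Nat.cast_zero, zero_mul, h0 0 _ le_rfl hΔ0] using hφ_reg x y)
  have key := le_of_schemeStep_seq hE hX0 hΔ0.le hΔ1.le (v := fun m => v (j + m))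
    (fun m => hv (j + m)) (by positivity) y (hv_reg j · y) k x
  have hj : 0 ≤ (j : ℝ) * Δ := by positivity
  have hgrowth := one_add_pow_le_exp hΔ0.le (k := k) (T := T) (by linarith)
  have hN' : schemeConstant E X Y = N := by rw [schemeConstant, hMX2, hMY2, hN]
  have hN0 : 0 ≤ N := hN' ▸ schemeConstant_nonneg hE
  simp only [v, hN', add_zero, Nat.cast_add, add_mul] at key
  exact key.trans (by gcongr)

theorem stmt_15 {Ω : Type*} (d : ℕ) (E : (Ω → ℝ) → ℝ)
    (hmono : ∀ X Y : Ω → ℝ, (∀ ω, X ω ≤ Y ω) → E X ≤ E Y)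
    (hconst : ∀ c : ℝ, E (fun _ => c) = c)
    (hsub : ∀ X Y : Ω → ℝ, E (fun ω => X ω + Y ω) ≤ E X + E Y)
    (hpos : ∀ lam : ℝ, 0 ≤ lam → ∀ X : Ω → ℝ, E (fun ω => lam * X ω) = lam * E X)
    (X Y : Ω → EuclideanSpace ℝ (Fin d))
    (hX0 : ∀ p : EuclideanSpace ℝ (Fin d), E (fun ω => inner ℝ p (X ω)) = (0 : ℝ))
    (MX2 MY2 : ℝ)
    (hMX2 : E (fun ω => ‖X ω‖ ^ 2) = MX2)
    (hMY2 : E (fun ω => ‖Y ω‖ ^ 2) = MY2)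
    (φ : EuclideanSpace ℝ (Fin d) → ℝ) (Cφ β : ℝ) (hCφ : 0 < Cφ)
    (hβ0 : 0 < β) (hβ1 : β ≤ 1)
    (hφlb : ∃ m : ℝ, ∀ z, m ≤ φ z)
    (hφ : ∀ x y, |φ x - φ y| ≤ Cφ * ‖x - y‖ ^ β)
    (T Δ : ℝ) (hT : 1 ≤ T) (hΔ0 : 0 < Δ) (hΔ1 : Δ < 1)
    (uΔ : ℝ → EuclideanSpace ℝ (Fin d) → ℝ)
    (h0 : ∀ t x, 0 ≤ t → t < Δ → uΔ t x = φ x)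
    (hrec : ∀ t x, Δ ≤ t →
      uΔ t x = E (fun ω => uΔ (t - Δ) (x + Real.sqrt Δ • X ω + Δ • Y ω)))
    (N : ℝ) (hN : N = 2 * MX2 + 3 * MY2) :
    ∀ (j k : ℕ), (j : ℝ) * Δ < T → (j : ℝ) * Δ + (k : ℝ) * Δ ≤ T →
      ∀ ε : ℝ, 0 < ε →
        ∀ x y, uΔ ((j : ℝ) * Δ + (k : ℝ) * Δ) x
          ≤ uΔ ((j : ℝ) * Δ) y
            + (Cφ * (β / 2) * ε) * (1 + Δ) ^ k * ‖x - y‖ ^ 2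
            + (Cφ * (β / 2) * ε) * N * Real.exp T * (k : ℝ) * Δ
            + Cφ * ((2 - β) / 2) * ε ^ (-(β / (2 - β))) :=
  stmt_15_general d E hmono hconst hsub hpos X Y hX0 MX2 MY2 hMX2 hMY2 φ Cφ β hCφ hβ0 hβ1 hφ T Δ hΔ0
    hΔ1 uΔ h0 hrec N hN
end

section
/- Maximal distribution moment bound: Let Ê and Ẽ be sublinear expectations, Y ∈ ℝ^d with Ê[|Y|] = M_Y¹ < ∞, and suppose ζ ∈ ℝ^d satisfies Ẽ[ψ(ζ)] = max over q ∈ Q of ψ(q) for a bounded closed convex set Q ⊂ ℝ^d, and that Ê[⟨p,Y⟩] = max over q ∈ Q of ⟨p,q⟩ for all p ∈ ℝ^d. Then every q ∈ Q satisfies |q| ≤ M_Y¹, and consequently Ẽ[|ζ|^p] ≤ (M_Y¹)^p for every p > 0. -/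
open RealInnerProductSpace

section SublinearExpectation

variable {Ω : Type*} {E : (Ω → ℝ) → ℝ}

theorem sublinearExpectation_nonneg
    (hmono : ∀ X Y : Ω → ℝ, (∀ ω, X ω ≤ Y ω) → E X ≤ E Y)
    (hpos : ∀ lam : ℝ, 0 ≤ lam → ∀ X : Ω → ℝ, E (fun ω => lam * X ω) = lam * E X)
    {X : Ω → ℝ} (hX : ∀ ω, 0 ≤ X ω) : 0 ≤ E X := by
  have hzero : E (fun _ => 0) = 0 := by simpa using hpos 0 le_rfl X
  exact hzero ▸ hmono _ _ hX

theorem sublinearExpectation_inner_le {F : Type*} [NormedAddCommGroup F] [InnerProductSpace ℝ F]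
    (hmono : ∀ X Y : Ω → ℝ, (∀ ω, X ω ≤ Y ω) → E X ≤ E Y)
    (hpos : ∀ lam : ℝ, 0 ≤ lam → ∀ X : Ω → ℝ, E (fun ω => lam * X ω) = lam * E X)
    (p : F) (Y : Ω → F) :
    E (fun ω => ⟪p, Y ω⟫) ≤ ‖p‖ * E (fun ω => ‖Y ω‖) := by
  calc E (fun ω => ⟪p, Y ω⟫) ≤ E (fun ω => ‖p‖ * ‖Y ω‖) :=
        hmono _ _ fun ω => real_inner_le_norm p (Y ω)
    _ = ‖p‖ * E (fun ω => ‖Y ω‖) := hpos _ (norm_nonneg p) _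

end SublinearExpectation

-- Evaluate the support function of `Q` in the direction `q ∈ Q` itself: `‖q‖² ≤ ‖q‖ M`.
theorem norm_le_of_sSup_inner_le {F : Type*} [NormedAddCommGroup F] [InnerProductSpace ℝ F]
    {Q : Set F} (hQ : IsCompact Q) {M : ℝ} (hM : 0 ≤ M)
    (hsupp : ∀ p : F, sSup ((fun q => ⟪p, q⟫) '' Q) ≤ ‖p‖ * M) {q : F} (hq : q ∈ Q) :
    ‖q‖ ≤ M := by
  have hsq : ‖q‖ * ‖q‖ ≤ ‖q‖ * M :=
    calc ‖q‖ * ‖q‖ = ⟪q, q⟫ := (real_inner_self_eq_norm_mul_norm q).symm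
      _ ≤ sSup ((fun q' => ⟪q, q'⟫) '' Q) :=
        le_csSup (hQ.image (innerSL ℝ q).continuous).bddAbove ⟨q, hq, rfl⟩
      _ ≤ ‖q‖ * M := hsupp q
  rcases (norm_nonneg q).eq_or_lt with hq0 | hq0
  · exact hq0 ▸ hM
  · exact le_of_mul_le_mul_left hsq hq0

theorem sSup_image_norm_rpow_le {α : Type*} [SeminormedAddGroup α] {Q : Set α} {M : ℝ}
    (hM : 0 ≤ M) (hQ : ∀ q ∈ Q, ‖q‖ ≤ M) {p : ℝ} (hp : 0 ≤ p) : sSup ((fun q => ‖q‖ ^ p) '' Q) ≤ M ^ p := by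
  refine Real.sSup_le ?_ (Real.rpow_nonneg hM p)
  rintro _ ⟨q, hq, rfl⟩
  exact Real.rpow_le_rpow (norm_nonneg q) (hQ q hq) hp

theorem stmt_16_general {Ω Ω' : Type*} (d : ℕ)
    (E : (Ω → ℝ) → ℝ) (E' : (Ω' → ℝ) → ℝ)
    (hmono : ∀ X Y : Ω → ℝ, (∀ ω, X ω ≤ Y ω) → E X ≤ E Y)
    (hpos : ∀ lam : ℝ, 0 ≤ lam → ∀ X : Ω → ℝ, E (fun ω => lam * X ω) = lam * E X)
    (Y : Ω → EuclideanSpace ℝ (Fin d)) (MY1 : ℝ)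
    (hMY1 : E (fun ω => ‖Y ω‖) = MY1)
    (Q : Set (EuclideanSpace ℝ (Fin d)))
    (hQc : IsCompact Q)
    (ζ : Ω' → EuclideanSpace ℝ (Fin d))
    (hζ : ∀ ψ : EuclideanSpace ℝ (Fin d) → ℝ, Continuous ψ →
      E' (fun ω => ψ (ζ ω)) = sSup (ψ '' Q))
    (hY : ∀ p : EuclideanSpace ℝ (Fin d),
      E (fun ω => inner ℝ p (Y ω)) = sSup ((fun q => (inner ℝ p q : ℝ)) '' Q)) :
    (∀ q ∈ Q, ‖q‖ ≤ MY1) ∧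
    ∀ p : ℝ, 0 < p → E' (fun ω => ‖ζ ω‖ ^ p) ≤ MY1 ^ p := by
  have hMY1_nonneg : 0 ≤ MY1 :=
    hMY1 ▸ sublinearExpectation_nonneg hmono hpos fun ω => norm_nonneg (Y ω)
  have hbound : ∀ q ∈ Q, ‖q‖ ≤ MY1 := fun q hq =>
    norm_le_of_sSup_inner_le hQc hMY1_nonneg
      (fun p => hY p ▸ hMY1 ▸ sublinearExpectation_inner_le hmono hpos p Y) hq
  refine ⟨hbound, fun p hp => ?_⟩
  rw [hζ _ (continuous_norm.rpow_const fun _ => Or.inr hp.le)]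
  exact sSup_image_norm_rpow_le hMY1_nonneg hbound hp.le

theorem stmt_16 {Ω Ω' : Type*} (d : ℕ)
    (E : (Ω → ℝ) → ℝ) (E' : (Ω' → ℝ) → ℝ)
    (hmono : ∀ X Y : Ω → ℝ, (∀ ω, X ω ≤ Y ω) → E X ≤ E Y)
    (hconst : ∀ c : ℝ, E (fun _ => c) = c)
    (hsub : ∀ X Y : Ω → ℝ, E (fun ω => X ω + Y ω) ≤ E X + E Y)
    (hpos : ∀ lam : ℝ, 0 ≤ lam → ∀ X : Ω → ℝ, E (fun ω => lam * X ω) = lam * E X)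
    (hmono' : ∀ X Y : Ω' → ℝ, (∀ ω, X ω ≤ Y ω) → E' X ≤ E' Y)
    (hconst' : ∀ c : ℝ, E' (fun _ => c) = c)
    (hsub' : ∀ X Y : Ω' → ℝ, E' (fun ω => X ω + Y ω) ≤ E' X + E' Y)
    (hpos' : ∀ lam : ℝ, 0 ≤ lam → ∀ X : Ω' → ℝ, E' (fun ω => lam * X ω) = lam * E' X)
    (Y : Ω → EuclideanSpace ℝ (Fin d)) (MY1 : ℝ)
    (hMY1 : E (fun ω => ‖Y ω‖) = MY1)
    (Q : Set (EuclideanSpace ℝ (Fin d)))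
    (hQc : IsCompact Q) (hQconv : Convex ℝ Q) (hQne : Q.Nonempty)
    (ζ : Ω' → EuclideanSpace ℝ (Fin d))
    (hζ : ∀ ψ : EuclideanSpace ℝ (Fin d) → ℝ, Continuous ψ →
      E' (fun ω => ψ (ζ ω)) = sSup (ψ '' Q))
    (hY : ∀ p : EuclideanSpace ℝ (Fin d),
      E (fun ω => inner ℝ p (Y ω)) = sSup ((fun q => (inner ℝ p q : ℝ)) '' Q)) :
    (∀ q ∈ Q, ‖q‖ ≤ MY1) ∧
    ∀ p : ℝ, 0 < p → E' (fun ω => ‖ζ ω‖ ^ p) ≤ MY1 ^ p :=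
  stmt_16_general d E E' hmono hpos Y MY1 hMY1 Q hQc ζ hζ hY
end
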